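/- If the gain matrix V is irreducible, then the optimal value of the max-min SIR-balancing problem equals the reciprocal of the largest spectral radius: max_{p ∈ P} min_{1≤k≤K} SIR_k(p)/γ_k = 1 / max_{1≤n≤N} ρ(B^(n)). -/

import Mathlib

open Matrix

def MatIrred {m : Type*} [Fintype m] (M : Matrix m m ℝ) : Prop :=
  ∀ S : Set m, S.Nonempty → S ≠ Set.univ → ∃ i ∈ S, ∃ j ∉ S, 0 < M i j

noncomputable def specRad {m : Type*} [Fintype m] [DecidableEq m] (M : Matrix m m ℝ) : ℝ :=
  sSup ((fun w : ℂ => ‖w‖) '' spectrum ℂ (M.map fun x => (x : ℂ)))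

noncomputable def SIR {K : ℕ} (V : Matrix (Fin K) (Fin K) ℝ) (z : Fin K → ℝ)
    (p : Fin K → ℝ) (k : Fin K) : ℝ :=
  p k / (V.mulVec p k + z k)

/-- The set `P` of admissible power vectors. -/
def Pset {K N : ℕ} (C : Matrix (Fin N) (Fin K) ℝ) (phat : Fin N → ℝ) :
    Set (Fin K → ℝ) :=
  {p | (∀ k, 0 ≤ p k) ∧ ∀ n, C.mulVec p n ≤ phat n}

def Pplus {K N : ℕ} (C : Matrix (Fin N) (Fin K) ℝ) (phat : Fin N → ℝ) :
    Set (Fin K → ℝ) :=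
  {p ∈ Pset C phat | ∀ k, 0 < p k}

/-- Normalized power-constraint functions `gₙ(p) = cₙᵀ p / Pₙ`. -/
noncomputable def gcon {K N : ℕ} (C : Matrix (Fin N) (Fin K) ℝ) (phat : Fin N → ℝ)
    (n : Fin N) (p : Fin K → ℝ) : ℝ :=
  C.mulVec p n / phat n

/-- The matrices `B⁽ⁿ⁾ = Γ (V + (1/Pₙ) z cₙᵀ)`. -/
noncomputable def Bmat {K N : ℕ} (V : Matrix (Fin K) (Fin K) ℝ) (z : Fin K → ℝ)
    (γ : Fin K → ℝ) (C : Matrix (Fin N) (Fin K) ℝ) (phat : Fin N → ℝ) (n : Fin N) :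
    Matrix (Fin K) (Fin K) ℝ :=
  Matrix.diagonal γ * (V + (phat n)⁻¹ • Matrix.vecMulVec z (C n))

/-- The extended `(K+1)×(K+1)` matrices `A⁽ⁿ⁾`. -/
noncomputable def Amat {K N : ℕ} (V : Matrix (Fin K) (Fin K) ℝ) (z : Fin K → ℝ)
    (γ : Fin K → ℝ) (C : Matrix (Fin N) (Fin K) ℝ) (phat : Fin N → ℝ) (n : Fin N) :
    Matrix (Fin (K+1)) (Fin (K+1)) ℝ :=
  Matrix.of fun i j =>
    if hi : (i : ℕ) < K then
      if hj : (j : ℕ) < K then γ ⟨i, hi⟩ * V ⟨i, hi⟩ ⟨j, hj⟩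
      else γ ⟨i, hi⟩ * z ⟨i, hi⟩
    else
      if hj : (j : ℕ) < K then (phat n)⁻¹ * ∑ k, C n k * (γ k * V k ⟨j, hj⟩)
      else (phat n)⁻¹ * ∑ k, C n k * (γ k * z k)

def MaxMinBalanced {K N : ℕ} (V : Matrix (Fin K) (Fin K) ℝ) (z : Fin K → ℝ)
    (γ : Fin K → ℝ) (C : Matrix (Fin N) (Fin K) ℝ) (phat : Fin N → ℝ)
    (pbar : Fin K → ℝ) : Prop :=
  pbar ∈ Pset C phat ∧
    ∀ p ∈ Pset C phat, (⨅ k, SIR V z p k / γ k) ≤ ⨅ k, SIR V z pbar k / γ k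

/-- The set `N₀(p)` of active power constraints. -/
def activeSet {K N : ℕ} (C : Matrix (Fin N) (Fin K) ℝ) (phat : Fin N → ℝ)
    (p : Fin K → ℝ) : Set (Fin N) :=
  {n | gcon C phat n p = 1 ∧ ∀ m, gcon C phat m p ≤ gcon C phat n p}

/-- The (relatively open) probability simplex `Π⁺_K`. -/
def PosSimplex (K : ℕ) : Set (Fin K → ℝ) :=
  {w | (∀ k, 0 < w k) ∧ ∑ k, w k = 1}

/-- The feasible QoS region `F`. -/
def QoSRegion {K N : ℕ} (V : Matrix (Fin K) (Fin K) ℝ) (z : Fin K → ℝ)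
    (γ : Fin K → ℝ) (C : Matrix (Fin N) (Fin K) ℝ) (phat : Fin N → ℝ)
    (φ : ℝ → ℝ) : Set (Fin K → ℝ) :=
  {q | ∃ p ∈ Pplus C phat, ∀ k, q k = φ (SIR V z p k / γ k)}

/-!
Each `B⁽ⁿ⁾` is nonnegative and irreducible, so by Perron–Frobenius it has a positive eigenvector
for `ρ(B⁽ⁿ⁾)`, and `ρ(B⁽ⁿ⁾)` is bounded above (below) by any `c` with `B⁽ⁿ⁾ q ≤ c q` (`≥`) for a
positive `q`. If `p ∈ P` and `SIR_k(p)/γ_k ≥ t > 0` for all `k`, then `cₙᵀ p ≤ Pₙ` gives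
`B⁽ⁿ⁾ p ≤ p / t`, so `ρ(B⁽ⁿ⁾) ≤ 1/t` for every `n`. Conversely, for `n` maximizing `ρ(B⁽ⁿ⁾)` with
`cₙ ≠ 0`, the Perron vector scaled to `cₙᵀ p = Pₙ` satisfies `Γ (V p + z) = ρ p`, so all the
ratios `SIR_k(p)/γ_k` equal `1/ρ`; and `p ∈ P`, since `cₘᵀ p > Pₘ` would give `B⁽ᵐ⁾ p > ρ p` and
hence `ρ(B⁽ᵐ⁾) > ρ`.

The Perron vector of an irreducible `A ≥ 0` comes from maximizing `t` over the compact set of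
pairs `(t, x)` with `x` in the standard simplex and `t x ≤ A x`: at a maximizer `t x = A x`,
since otherwise the positive matrix `(1 + A)ᵐ` would turn `t x ≤ A x` into a strict inequality.
-/

section Spectrum

variable {ι : Type*} [Fintype ι] [DecidableEq ι]

theorem Matrix.mem_spectrum_iff_exists_mulVec_eq_smul {𝕜 : Type*} [Field 𝕜]
    (A : Matrix ι ι 𝕜) (μ : 𝕜) : μ ∈ spectrum 𝕜 A ↔ ∃ v ≠ 0, A *ᵥ v = μ • v := by
  rw [← Matrix.spectrum_toLin', ← Module.End.hasEigenvalue_iff_mem_spectrum,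
    Module.End.hasEigenvalue_iff, Submodule.ne_bot_iff]
  simp only [Module.End.mem_eigenspace_iff, Matrix.toLin'_apply]
  tauto

theorem exists_mem_spectrum_norm_eq_specRad [Nonempty ι] (M : Matrix ι ι ℝ) :
    ∃ μ ∈ spectrum ℂ (M.map ((↑) : ℝ → ℂ)), ‖μ‖ = specRad M :=
  ((spectrum.nonempty_of_isAlgClosed_of_finiteDimensional ℂ _).image _).csSup_mem
    ((Matrix.finite_spectrum _).image _)

theorem abs_le_specRad_of_mulVec_eq_smul {M : Matrix ι ι ℝ} {r : ℝ} {v : ι → ℝ}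
    (hv : v ≠ 0) (h : M *ᵥ v = r • v) : |r| ≤ specRad M := by
  have hr : (r : ℂ) ∈ spectrum ℂ (M.map ((↑) : ℝ → ℂ)) := by
    refine (Matrix.mem_spectrum_iff_exists_mulVec_eq_smul _ _).2
      ⟨fun k => (v k : ℂ), fun h0 => hv (funext fun k => by simpa using congrFun h0 k), ?_⟩
    funext k
    simpa [Matrix.mulVec, dotProduct] using congrArg ((↑) : ℝ → ℂ) (congrFun h k)
  have := le_csSup ((Matrix.finite_spectrum _).image (fun w : ℂ => ‖w‖)).bddAbove ⟨_, hr, rfl⟩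
  simpa [specRad] using this

end Spectrum

theorem exists_gt_forall_mul_lt {ι : Type*} [Finite ι] {r : ℝ} {u w : ι → ℝ}
    (h : ∀ k, r * u k < w k) : ∃ t > r, ∀ k, t * u k < w k := by
  have : ∀ᶠ t in nhdsWithin r (Set.Ioi r), ∀ k, t * u k < w k :=
    Filter.eventually_all.2 fun k => nhdsWithin_le_nhds <|
      (continuous_id.mul continuous_const).continuousAt.eventually_lt continuousAt_const (h k)
  obtain ⟨t, ht, hrt⟩ := (this.and self_mem_nhdsWithin).exists
  exact ⟨t, hrt, ht⟩

section Nonneg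

variable {ι : Type*} [Fintype ι] {M : Matrix ι ι ℝ}

theorem Matrix.mulVec_mono_of_nonneg (hM : ∀ i j, 0 ≤ M i j) {x y : ι → ℝ} (h : x ≤ y) :
    M *ᵥ x ≤ M *ᵥ y :=
  fun i => Finset.sum_le_sum fun j _ => mul_le_mul_of_nonneg_left (h j) (hM i j)

theorem Matrix.mulVec_nonneg_of_nonneg {m : Type*} {B : Matrix m ι ℝ} (hB : ∀ i j, 0 ≤ B i j)
    {x : ι → ℝ} (hx : 0 ≤ x) : 0 ≤ B *ᵥ x :=
  fun i => Finset.sum_nonneg fun j _ => mul_nonneg (hB i j) (hx j)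

theorem Matrix.mul_le_mulVec_apply_of_nonneg {m : Type*} {B : Matrix m ι ℝ}
    (hB : ∀ i j, 0 ≤ B i j) {x : ι → ℝ} (hx : 0 ≤ x) (i : m) (j : ι) : B i j * x j ≤ (B *ᵥ x) i :=
  Finset.single_le_sum (f := fun j => B i j * x j) (fun j _ => mul_nonneg (hB i j) (hx j))
    (Finset.mem_univ j)

theorem Matrix.mul_apply_le_mul_apply_of_nonneg {X Y : Matrix ι ι ℝ} (hX : ∀ i j, 0 ≤ X i j)
    (hY : ∀ i j, 0 ≤ Y i j) (i l j : ι) : X i l * Y l j ≤ (X * Y) i j :=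
  Finset.single_le_sum (f := fun l => X i l * Y l j) (fun l _ => mul_nonneg (hX i l) (hY l j))
    (Finset.mem_univ l)

theorem Matrix.mulVec_pos_of_pos {P : Matrix ι ι ℝ} (hP : ∀ i j, 0 < P i j) {y : ι → ℝ}
    (hy : 0 ≤ y) (hy0 : y ≠ 0) (k : ι) : 0 < (P *ᵥ y) k := by
  obtain ⟨j, hj⟩ := Function.ne_iff.1 hy0
  exact (mul_pos (hP k j) ((hy j).lt_of_ne' hj)).trans_le
    (Matrix.mul_le_mulVec_apply_of_nonneg (fun i j => (hP i j).le) hy k j)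

theorem le_of_smul_le_mulVec_of_mulVec_le_smul (hM : ∀ i j, 0 ≤ M i j) {y q : ι → ℝ}
    {s c : ℝ} (hy : 0 ≤ y) (hy0 : y ≠ 0) (hs : s • y ≤ M *ᵥ y) (hq : ∀ k, 0 < q k)
    (hc : M *ᵥ q ≤ c • q) : s ≤ c := by
  obtain ⟨k₁, hk₁⟩ := Function.ne_iff.1 hy0
  obtain ⟨k₀, -, hk₀⟩ :=
    Finset.exists_max_image Finset.univ (fun k => y k / q k) ⟨k₁, Finset.mem_univ _⟩
  set a := y k₀ / q k₀
  have hya : y ≤ a • q := fun k => (div_le_iff₀ (hq k)).1 (hk₀ k (Finset.mem_univ k))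
  have ha : 0 < a :=
    (div_pos ((hy k₁).lt_of_ne' hk₁) (hq k₁)).trans_le (hk₀ k₁ (Finset.mem_univ _))
  have hyk₀ : y k₀ = a * q k₀ := (div_mul_cancel₀ _ (hq k₀).ne').symm
  have key : s * y k₀ ≤ c * y k₀ := calc
    s * y k₀ ≤ (M *ᵥ y) k₀ := hs k₀
    _ ≤ (M *ᵥ (a • q)) k₀ := Matrix.mulVec_mono_of_nonneg hM hya k₀
    _ = a * (M *ᵥ q) k₀ := by rw [Matrix.mulVec_smul]; rfl
    _ ≤ a * (c * q k₀) := mul_le_mul_of_nonneg_left (hc k₀) ha.le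
    _ = c * y k₀ := by rw [hyk₀]; ring
  exact le_of_mul_le_mul_right key (hyk₀ ▸ mul_pos ha (hq k₀))

theorem norm_smul_le_mulVec_norm (hM : ∀ i j, 0 ≤ M i j) {μ : ℂ} {x : ι → ℂ}
    (hx : M.map ((↑) : ℝ → ℂ) *ᵥ x = μ • x) :
    ‖μ‖ • (fun k => ‖x k‖) ≤ M *ᵥ fun k => ‖x k‖ := fun k => calc
  ‖μ‖ * ‖x k‖ = ‖∑ j, (M k j : ℂ) * x j‖ := by
    rw [← norm_mul, ← smul_eq_mul, ← Pi.smul_apply, ← hx]; rfl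
  _ ≤ ∑ j, ‖(M k j : ℂ) * x j‖ := norm_sum_le _ _
  _ = (M *ᵥ fun k => ‖x k‖) k := by
    simp [Matrix.mulVec, dotProduct, abs_of_nonneg (hM k _)]

theorem specRad_le_of_mulVec_le_smul [DecidableEq ι] [Nonempty ι] (hM : ∀ i j, 0 ≤ M i j)
    {q : ι → ℝ} (hq : ∀ k, 0 < q k) {c : ℝ} (h : M *ᵥ q ≤ c • q) : specRad M ≤ c := by
  obtain ⟨μ, hμ, hnorm⟩ := exists_mem_spectrum_norm_eq_specRad M
  obtain ⟨x, hx0, hx⟩ := (Matrix.mem_spectrum_iff_exists_mulVec_eq_smul _ _).1 hμ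
  refine hnorm ▸ le_of_smul_le_mulVec_of_mulVec_le_smul hM (fun k => norm_nonneg _) ?_
    (norm_smul_le_mulVec_norm hM hx) hq h
  exact fun h0 => hx0 (funext fun k => norm_eq_zero.1 (congrFun h0 k))

end Nonneg

section Irreducible

variable {ι : Type*} [Fintype ι] {A : Matrix ι ι ℝ}

theorem MatIrred.of_pos_imp {B : Matrix ι ι ℝ} (hA : MatIrred A)
    (h : ∀ i j, 0 < A i j → 0 < B i j) : MatIrred B := fun S hS hSu =>
  let ⟨i, hi, j, hj, hij⟩ := hA S hS hSu
  ⟨i, hi, j, hj, h i j hij⟩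

theorem MatIrred.pos_of_mulVec_eq_smul (hA : ∀ i j, 0 ≤ A i j) (hirr : MatIrred A)
    {x : ι → ℝ} {r : ℝ} (hx : 0 ≤ x) (hx0 : x ≠ 0) (h : A *ᵥ x = r • x) (k : ι) :
    0 < x k := by
  by_contra! hk
  obtain ⟨i, hi, j, hj, hij⟩ := hirr {k | x k = 0} ⟨k, le_antisymm hk (hx k)⟩
    fun hS => hx0 (funext fun k => (hS ▸ Set.mem_univ k : k ∈ {k | x k = 0}))
  have : 0 < (A *ᵥ x) i := (mul_pos hij ((hx j).lt_of_ne' hj)).trans_le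
    (Matrix.mul_le_mulVec_apply_of_nonneg hA hx i j)
  simp_all

def collatzWielandtSet (A : Matrix ι ι ℝ) : Set (ℝ × (ι → ℝ)) :=
  {p | 0 ≤ p.1 ∧ p.2 ∈ stdSimplex ℝ ι ∧ p.1 • p.2 ≤ A *ᵥ p.2}

theorem isCompact_collatzWielandtSet (hA : ∀ i j, 0 ≤ A i j) :
    IsCompact (collatzWielandtSet A) := by
  refine ((isCompact_Icc (a := 0) (b := ∑ i, ∑ j, A i j)).prod
    (isCompact_stdSimplex ℝ ι)).of_isClosed_subset ?_ ?_
  · exact (isClosed_le continuous_const continuous_fst).inter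
      (((isClosed_stdSimplex ℝ ι).preimage continuous_snd).inter
        (isClosed_le (continuous_fst.smul continuous_snd)
          (continuous_const.matrix_mulVec continuous_snd)))
  · rintro ⟨t, x⟩ ⟨ht, hx, hle⟩
    refine ⟨⟨ht, ?_⟩, hx⟩
    have hx1 : ∀ j, x j ≤ 1 := fun j =>
      (Finset.single_le_sum (fun k _ => hx.1 k) (Finset.mem_univ j)).trans_eq hx.2
    calc t = ∑ k, t * x k := by rw [← Finset.mul_sum, hx.2, mul_one]
      _ ≤ ∑ k, (A *ᵥ x) k := Finset.sum_le_sum fun k _ => hle k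
      _ ≤ ∑ k, ∑ j, A k j := Finset.sum_le_sum fun k _ => Finset.sum_le_sum fun j _ =>
        mul_le_of_le_one_right (hA k j) (hx1 j)

theorem mk_mem_collatzWielandtSet [Nonempty ι] {t : ℝ} {u : ι → ℝ} (ht : 0 ≤ t)
    (hu : ∀ k, 0 < u k) (h : t • u ≤ A *ᵥ u) :
    (t, (∑ k, u k)⁻¹ • u) ∈ collatzWielandtSet A := by
  have hs : 0 < ∑ k, u k := Finset.sum_pos (fun k _ => hu k) Finset.univ_nonempty
  refine ⟨ht, ⟨fun k => mul_nonneg (inv_nonneg.2 hs.le) (hu k).le, ?_⟩, ?_⟩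
  · simp [← Finset.mul_sum, hs.ne']
  · rw [Matrix.mulVec_smul, smul_comm]
    exact smul_le_smul_of_nonneg_left h (inv_nonneg.2 hs.le)

variable [DecidableEq ι]

theorem MatIrred.exists_pow_one_add_pos (hA : ∀ i j, 0 ≤ A i j) (hirr : MatIrred A) :
    ∃ m, ∀ i j, 0 < ((1 + A) ^ m : Matrix ι ι ℝ) i j := by
  set Q := 1 + A
  have hQdiag : ∀ i, 1 ≤ Q i i := fun i => by simp [Q, hA i i]
  have hAQ : ∀ i j, A i j ≤ Q i j := fun i j =>
    le_add_of_nonneg_left (by by_cases h : i = j <;> simp [Matrix.one_apply, h])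
  have hQ : ∀ i j, 0 ≤ Q i j := fun i j => (hA i j).trans (hAQ i j)
  have hmono : ∀ i j, Monotone fun m => (Q ^ m) i j := fun i j =>
    monotone_nat_of_le_succ fun m => calc
      (Q ^ m) i j ≤ (Q ^ m) i j * Q j j :=
        le_mul_of_one_le_right (Matrix.pow_apply_nonneg hQ m i j) (hQdiag j)
      _ ≤ (Q ^ (m + 1)) i j := pow_succ Q m ▸
        Matrix.mul_apply_le_mul_apply_of_nonneg (Matrix.pow_apply_nonneg hQ m) hQ i j j
  -- the indices reachable from `i` form a nonempty set with no edge of `A` leaving it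
  have hreach : ∀ i j, ∃ m, 0 < (Q ^ m) i j := by
    intro i
    by_contra! hS
    obtain ⟨j₀, hj₀⟩ := hS
    obtain ⟨l, ⟨m, hm⟩, j, hj, hlj⟩ := hirr {j | ∃ m, 0 < (Q ^ m) i j} ⟨i, 0, by simp⟩
      ((Set.ne_univ_iff_exists_notMem _).2 ⟨j₀, fun ⟨m, hm⟩ => (hj₀ m).not_gt hm⟩)
    exact hj ⟨m + 1, pow_succ Q m ▸ (mul_pos hm (hlj.trans_le (hAQ l j))).trans_le
      (Matrix.mul_apply_le_mul_apply_of_nonneg (Matrix.pow_apply_nonneg hQ m) hQ i l j)⟩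
  choose m hm using hreach
  refine ⟨Finset.univ.sup fun p : ι × ι => m p.1 p.2, fun i j => ?_⟩
  exact (hm i j).trans_le (hmono i j (Finset.le_sup (f := fun p : ι × ι => m p.1 p.2)
    (Finset.mem_univ (i, j))))

theorem MatIrred.exists_pos_mulVec_eq_smul [Nonempty ι] (hA : ∀ i j, 0 ≤ A i j)
    (hirr : MatIrred A) : ∃ r : ℝ, ∃ v : ι → ℝ, (∀ k, 0 < v k) ∧ A *ᵥ v = r • v := by
  obtain ⟨i⟩ := ‹Nonempty ι›
  have hne : (collatzWielandtSet A).Nonempty := by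
    refine ⟨(0, Pi.single i 1), le_rfl, single_mem_stdSimplex ℝ i, ?_⟩
    simpa using Matrix.mulVec_nonneg_of_nonneg hA (single_mem_stdSimplex ℝ i).1
  obtain ⟨⟨r, x⟩, ⟨hr, hx, hrx⟩, hmax⟩ :=
    (isCompact_collatzWielandtSet hA).exists_isMaxOn hne continuous_fst.continuousOn
  have hx0 : x ≠ 0 := by rintro rfl; simp [stdSimplex] at hx
  suffices heig : A *ᵥ x = r • x from
    ⟨r, x, MatIrred.pos_of_mulVec_eq_smul hA hirr hx.1 hx0 heig, heig⟩
  by_contra hne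
  obtain ⟨m, hm⟩ := MatIrred.exists_pow_one_add_pos hA hirr
  set P : Matrix ι ι ℝ := (1 + A) ^ m
  have hcomm : A * P = P * A := ((Commute.one_right A).add_right (Commute.refl A)).pow_right m
  have hlt : ∀ k, r * (P *ᵥ x) k < (A *ᵥ (P *ᵥ x)) k := fun k => by
    have := Matrix.mulVec_pos_of_pos hm (sub_nonneg.2 hrx) (sub_ne_zero.2 hne) k
    rwa [Matrix.mulVec_sub, Matrix.mulVec_smul, Matrix.mulVec_mulVec, ← hcomm,
      ← Matrix.mulVec_mulVec, Pi.sub_apply, sub_pos] at this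
  obtain ⟨t, hrt, ht⟩ := exists_gt_forall_mul_lt hlt
  exact hrt.not_ge (hmax (mk_mem_collatzWielandtSet (hr.trans hrt.le)
    (Matrix.mulVec_pos_of_pos hm hx.1 hx0) fun k => (ht k).le))

theorem MatIrred.exists_pos_mulVec_eq_specRad_smul [Nonempty ι] (hA : ∀ i j, 0 ≤ A i j)
    (hirr : MatIrred A) : ∃ v : ι → ℝ, (∀ k, 0 < v k) ∧ A *ᵥ v = specRad A • v := by
  obtain ⟨r, v, hv, hrv⟩ := MatIrred.exists_pos_mulVec_eq_smul hA hirr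
  have hv0 : v ≠ 0 := Function.ne_iff.2 ⟨Classical.arbitrary ι, (hv _).ne'⟩
  have hr : specRad A = r := le_antisymm (specRad_le_of_mulVec_le_smul hA hv hrv.le)
    ((le_abs_self r).trans (abs_le_specRad_of_mulVec_eq_smul hv0 hrv))
  exact ⟨v, hv, hr ▸ hrv⟩

theorem MatIrred.le_specRad_of_smul_le_mulVec [Nonempty ι] (hA : ∀ i j, 0 ≤ A i j)
    (hirr : MatIrred A) {x : ι → ℝ} {t : ℝ} (hx : 0 ≤ x) (hx0 : x ≠ 0)
    (h : t • x ≤ A *ᵥ x) : t ≤ specRad A := by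
  obtain ⟨v, hv, hAv⟩ := MatIrred.exists_pos_mulVec_eq_specRad_smul hA hirr
  exact le_of_smul_le_mulVec_of_mulVec_le_smul hA hx hx0 h hv hAv.le

theorem MatIrred.lt_specRad_of_mul_lt_mulVec [Nonempty ι] (hA : ∀ i j, 0 ≤ A i j)
    (hirr : MatIrred A) {p : ι → ℝ} {c : ℝ} (hp : ∀ k, 0 < p k)
    (h : ∀ k, c * p k < (A *ᵥ p) k) : c < specRad A := by
  obtain ⟨t, hct, ht⟩ := exists_gt_forall_mul_lt h
  exact hct.trans_le <| MatIrred.le_specRad_of_smul_le_mulVec hA hirr (fun k => (hp k).le)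
    (Function.ne_iff.2 ⟨Classical.arbitrary ι, (hp _).ne'⟩) fun k => (ht k).le

theorem specRad_le_specRad_of_le [Nonempty ι] {A B : Matrix ι ι ℝ} (hA : ∀ i j, 0 ≤ A i j)
    (hB : ∀ i j, 0 ≤ B i j) (hirr : MatIrred B) (hAB : ∀ i j, A i j ≤ B i j) :
    specRad A ≤ specRad B := by
  obtain ⟨v, hv, hBv⟩ := MatIrred.exists_pos_mulVec_eq_specRad_smul hB hirr
  refine specRad_le_of_mulVec_le_smul hA hv (hBv ▸ fun k => ?_)
  exact Finset.sum_le_sum fun j _ => mul_le_mul_of_nonneg_right (hAB k j) (hv j).le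

end Irreducible

section PowerControl

variable {K N : ℕ} {V : Matrix (Fin K) (Fin K) ℝ} {z γ : Fin K → ℝ}
  {C : Matrix (Fin N) (Fin K) ℝ} {phat : Fin N → ℝ}

theorem Bmat_apply (n : Fin N) (i j : Fin K) :
    Bmat V z γ C phat n i j = γ i * (V i j + (phat n)⁻¹ * (z i * C n j)) := by
  simp [Bmat, Matrix.diagonal_mul, Matrix.vecMulVec_apply]

theorem Bmat_mulVec_apply (n : Fin N) (p : Fin K → ℝ) (k : Fin K) :
    (Bmat V z γ C phat n *ᵥ p) k = γ k * ((V *ᵥ p) k + gcon C phat n p * z k) := by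
  simp only [Bmat, ← Matrix.mulVec_mulVec, Matrix.mulVec_diagonal, Matrix.add_mulVec,
    Matrix.smul_mulVec, Matrix.vecMulVec_mulVec, gcon]
  simp [Matrix.mulVec, div_eq_inv_mul, mul_assoc, mul_comm]

theorem matIrred_Bmat (hirr : MatIrred V) (hz : ∀ k, 0 < z k) (hγ : ∀ k, 0 < γ k)
    (hC : ∀ n k, 0 ≤ C n k) (hphat : ∀ n, 0 < phat n) (n : Fin N) :
    MatIrred (Bmat V z γ C phat n) :=
  MatIrred.of_pos_imp hirr fun i j hij => by
    rw [Bmat_apply]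
    exact mul_pos (hγ i) (add_pos_of_pos_of_nonneg hij
      (mul_nonneg (inv_nonneg.2 (hphat n).le) (mul_nonneg (hz i).le (hC n j))))

theorem SIR_div_eq (p : Fin K → ℝ) (k : Fin K) :
    SIR V z p k / γ k = p k / (γ k * ((V *ᵥ p) k + z k)) := by
  rw [SIR, div_div, mul_comm]

variable (hV : ∀ i j, 0 ≤ V i j) (hz : ∀ k, 0 < z k) (hγ : ∀ k, 0 < γ k)
  (hC : ∀ n k, 0 ≤ C n k) (hphat : ∀ n, 0 < phat n)
include hV hz hγ hC hphat

theorem Bmat_nonneg (n : Fin N) (i j : Fin K) : 0 ≤ Bmat V z γ C phat n i j := by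
  rw [Bmat_apply]
  exact mul_nonneg (hγ i).le (add_nonneg (hV i j)
    (mul_nonneg (inv_nonneg.2 (hphat n).le) (mul_nonneg (hz i).le (hC n j))))

variable [NeZero K]

theorem specRad_Bmat_le_inv_of_le_SIR {p : Fin K → ℝ} (hp : p ∈ Pset C phat) {t : ℝ} (ht : 0 < t)
    (hle : ∀ k, t ≤ SIR V z p k / γ k) (n : Fin N) :
    specRad (Bmat V z γ C phat n) ≤ t⁻¹ := by
  have hden : ∀ k, 0 < γ k * ((V *ᵥ p) k + z k) := fun k =>
    mul_pos (hγ k) (add_pos_of_nonneg_of_pos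
      (Matrix.mulVec_nonneg_of_nonneg hV hp.1 k) (hz k))
  have hsub : ∀ k, γ k * ((V *ᵥ p) k + z k) ≤ t⁻¹ * p k := fun k => by
    rw [inv_mul_eq_div, le_div_iff₀ ht, mul_comm, ← le_div_iff₀ (hden k), ← SIR_div_eq]
    exact hle k
  have hpos : ∀ k, 0 < p k := fun k =>
    pos_of_mul_pos_right ((hden k).trans_le (hsub k)) (inv_pos.2 ht).le
  refine specRad_le_of_mulVec_le_smul (Bmat_nonneg hV hz hγ hC hphat n) hpos fun k => ?_
  have hg : gcon C phat n p ≤ 1 := (div_le_one (hphat n)).2 (hp.2 n)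
  calc (Bmat V z γ C phat n *ᵥ p) k = γ k * ((V *ᵥ p) k + gcon C phat n p * z k) :=
        Bmat_mulVec_apply n p k
    _ ≤ γ k * ((V *ᵥ p) k + z k) := by
        gcongr
        exacts [(hγ k).le, mul_le_of_le_one_left (hz k).le hg]
    _ ≤ t⁻¹ * p k := hsub k

theorem exists_mem_Pset_SIR_div_eq_inv_specRad (hirr : MatIrred V) {n : Fin N}
    (hmax : ∀ m, specRad (Bmat V z γ C phat m) ≤ specRad (Bmat V z γ C phat n))
    (hrow : ∃ k, 0 < C n k) :
    0 < specRad (Bmat V z γ C phat n) ∧ ∃ p ∈ Pset C phat,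
      ∀ k, SIR V z p k / γ k = (specRad (Bmat V z γ C phat n))⁻¹ := by
  set r := specRad (Bmat V z γ C phat n)
  obtain ⟨v, hv, hBv⟩ := MatIrred.exists_pos_mulVec_eq_specRad_smul
    (Bmat_nonneg hV hz hγ hC hphat n) (matIrred_Bmat hirr hz hγ hC hphat n)
  obtain ⟨k₀, hk₀⟩ := hrow
  have hCv : 0 < (C *ᵥ v) n := (mul_pos hk₀ (hv k₀)).trans_le
    (Matrix.mul_le_mulVec_apply_of_nonneg hC (fun k => (hv k).le) n k₀)
  set p := (phat n / (C *ᵥ v) n) • v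
  have hp : ∀ k, 0 < p k := fun k => mul_pos (div_pos (hphat n) hCv) (hv k)
  have hgp : gcon C phat n p = 1 := by
    simp only [gcon, p, Matrix.mulVec_smul, Pi.smul_apply, smul_eq_mul]
    field_simp [hCv.ne', (hphat n).ne']
  have hbal : ∀ k, γ k * ((V *ᵥ p) k + z k) = r * p k := fun k => by
    have := congrFun (show Bmat V z γ C phat n *ᵥ p = r • p by
      rw [Matrix.mulVec_smul, hBv, smul_comm]) k
    rwa [Bmat_mulVec_apply, hgp, one_mul] at this
  refine ⟨pos_of_mul_pos_left ((hbal k₀).symm ▸ ?_ : 0 < r * p k₀) (hp k₀).le,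
    p, ⟨fun k => (hp k).le, fun m => ?_⟩, fun k => ?_⟩
  · exact mul_pos (hγ k₀) (add_pos_of_nonneg_of_pos
      (Matrix.mulVec_nonneg_of_nonneg hV (fun k => (hp k).le) k₀) (hz k₀))
  · by_contra! hm
    have hg : 1 < gcon C phat m p := (one_lt_div (hphat m)).2 hm
    refine (hmax m).not_gt (MatIrred.lt_specRad_of_mul_lt_mulVec
      (Bmat_nonneg hV hz hγ hC hphat m) (matIrred_Bmat hirr hz hγ hC hphat m) hp fun k => ?_)
    rw [Bmat_mulVec_apply, ← hbal k]
    exact mul_lt_mul_of_pos_left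
      ((add_lt_add_iff_left _).2 (lt_mul_of_one_lt_left (hz k) hg)) (hγ k)
  · rw [SIR_div_eq, hbal k, div_mul_cancel_right₀ (hp k).ne']

theorem exists_isMax_specRad_Bmat_of_row_pos (hirr : MatIrred V)
    (hCcol : ∀ k, ∃ n, 0 < C n k) :
    ∃ n, (∀ m, specRad (Bmat V z γ C phat m) ≤ specRad (Bmat V z γ C phat n)) ∧
      ∃ k, 0 < C n k := by
  obtain ⟨m, hm⟩ := hCcol 0
  have : Nonempty (Fin N) := ⟨m⟩
  obtain ⟨n₀, hn₀⟩ := Finite.exists_max fun n => specRad (Bmat V z γ C phat n)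
  by_cases hrow : ∃ k, 0 < C n₀ k
  · exact ⟨n₀, hn₀, hrow⟩
  -- a vanishing row gives `B⁽ⁿ⁰⁾ = Γ V`, which every `B⁽ᵐ⁾` dominates
  push Not at hrow
  refine ⟨m, fun l => (hn₀ l).trans (specRad_le_specRad_of_le
    (Bmat_nonneg hV hz hγ hC hphat n₀) (Bmat_nonneg hV hz hγ hC hphat m)
    (matIrred_Bmat hirr hz hγ hC hphat m) fun i j => ?_), 0, hm⟩
  rw [Bmat_apply, Bmat_apply, le_antisymm (hrow j) (hC n₀ j), mul_zero, mul_zero, add_zero]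
  exact mul_le_mul_of_nonneg_left (le_add_of_nonneg_right (mul_nonneg
    (inv_nonneg.2 (hphat m).le) (mul_nonneg (hz i).le (hC m j)))) (hγ i).le

end PowerControl

theorem stmt12_general    {K N : ℕ} (hK : 2 ≤ K)
    (V : Matrix (Fin K) (Fin K) ℝ) (z γ : Fin K → ℝ)
    (C : Matrix (Fin N) (Fin K) ℝ) (phat : Fin N → ℝ)
    (hV : ∀ i j, 0 ≤ V i j)
    (hz : ∀ k, 0 < z k) (hγ : ∀ k, 0 < γ k)
    (hC : ∀ n k, C n k = 0 ∨ C n k = 1) (hCcol : ∀ k, ∃ n, C n k = 1)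
    (hphat : ∀ n, 0 < phat n)
    (hirr : MatIrred V)
 :
    IsGreatest ((fun p => ⨅ k, SIR V z p k / γ k) '' Pset C phat)
      (⨆ n, specRad (Bmat V z γ C phat n))⁻¹ := by
  have : NeZero K := ⟨by omega⟩
  have hCnn : ∀ n k, 0 ≤ C n k := fun n k => by rcases hC n k with h | h <;> simp [h]
  obtain ⟨n, hmax, hrow⟩ := exists_isMax_specRad_Bmat_of_row_pos hV hz hγ hCnn hphat hirr
    fun k => (hCcol k).imp fun n (h : C n k = 1) => h ▸ one_pos
  have : Nonempty (Fin N) := ⟨n⟩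
  have hsup : ⨆ m, specRad (Bmat V z γ C phat m) = specRad (Bmat V z γ C phat n) :=
    le_antisymm (ciSup_le hmax) <|
      le_ciSup (f := fun m => specRad (Bmat V z γ C phat m)) (Set.finite_range _).bddAbove n
  rw [hsup]
  obtain ⟨hpos, p, hp, hbal⟩ :=
    exists_mem_Pset_SIR_div_eq_inv_specRad hV hz hγ hCnn hphat hirr hmax hrow
  refine ⟨⟨p, hp, by simp only [hbal, ciInf_const]⟩, ?_⟩
  rintro _ ⟨q, hq, rfl⟩
  rcases le_or_gt (⨅ k, SIR V z q k / γ k) 0 with ht | ht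
  · exact ht.trans (inv_nonneg.2 hpos.le)
  · exact (le_inv_comm₀ ht hpos).2 (specRad_Bmat_le_inv_of_le_SIR hV hz hγ hCnn hphat hq ht
      (fun k => ciInf_le (Set.finite_range _).bddBelow k) n)

theorem stmt12    {K N : ℕ} (hK : 2 ≤ K) (hN : 1 ≤ N)
    (V : Matrix (Fin K) (Fin K) ℝ) (z γ : Fin K → ℝ)
    (C : Matrix (Fin N) (Fin K) ℝ) (phat : Fin N → ℝ)
    (hV : ∀ i j, 0 ≤ V i j) (hVdiag : ∀ i, V i i = 0)
    (hz : ∀ k, 0 < z k) (hγ : ∀ k, 0 < γ k)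
    (hC : ∀ n k, C n k = 0 ∨ C n k = 1) (hCcol : ∀ k, ∃ n, C n k = 1)
    (hphat : ∀ n, 0 < phat n)
    (hirr : MatIrred V)
 :
    IsGreatest ((fun p => ⨅ k, SIR V z p k / γ k) '' Pset C phat)
      (⨆ n, specRad (Bmat V z γ C phat n))⁻¹ :=
  stmt12_general hK V z γ C phat hV hz hγ hC hCcol hphat hirr
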